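/- arXiv:2509.02788 — 4 statements merged into one kernel-verified Lean document; each statement's English description precedes it below -/
import Mathlib

section
/- For any constants η ∈ (0,1), α ∈ (0,1), k ≥ 2, if η = (1-α)/(3k) and m is sufficiently large (depending on k and α), then the sum ∑_{s=1}^{⌊ηn⌋} C(n,s) · (ks/((1-α)n))^{ms} tends to 0 as n → ∞. -/
open Finset Filter

private lemma pow_self_le_three_pow_mul_factorial (s : ℕ) :
    (s : ℝ) ^ s ≤ 3 ^ s * (s.factorial : ℝ) := by
  induction s with
  | zero => simp
  | succ t ih =>
    rcases Nat.eq_zero_or_pos t with ht | ht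
    · subst ht; norm_num
    · have htR : (0:ℝ) < t := by exact_mod_cast ht
      -- (t+1)^(t+1) = (t+1) * (t+1)^t ≤ (t+1) * (3 * t^t)
      have key : ((t:ℝ) + 1) ^ t ≤ 3 * (t:ℝ) ^ t := by
        have h1 : ((t:ℝ) + 1) = t * (1 + 1/t) := by field_simp
        have h2 : (1 + 1/(t:ℝ)) ^ t ≤ Real.exp (1/t) ^ t := by
          apply pow_le_pow_left₀ (by positivity)
          linarith [Real.add_one_le_exp (1/(t:ℝ))]
        have h3 : Real.exp (1/(t:ℝ)) ^ t = Real.exp 1 := by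
          rw [← Real.exp_nat_mul]; congr 1; field_simp
        have h4 : Real.exp 1 ≤ 3 := by
          have := Real.exp_one_lt_d9; linarith
        have h5 : (1 + 1/(t:ℝ)) ^ t ≤ 3 := by
          calc (1 + 1/(t:ℝ)) ^ t ≤ Real.exp (1/t) ^ t := h2
            _ = Real.exp 1 := h3
            _ ≤ 3 := h4
        calc ((t:ℝ) + 1) ^ t = (t:ℝ)^t * (1 + 1/t)^t := by
              rw [h1, mul_pow]
          _ ≤ (t:ℝ)^t * 3 := mul_le_mul_of_nonneg_left h5 (by positivity)
          _ = 3 * (t:ℝ)^t := by ring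
      have hfac : (t.factorial : ℝ) * ((t:ℝ)+1) = ((t+1).factorial : ℝ) := by
        rw [Nat.factorial_succ]; push_cast; ring
      calc ((t+1 : ℕ) : ℝ) ^ (t+1) = ((t:ℝ)+1)^t * ((t:ℝ)+1) := by
            push_cast; ring
        _ ≤ 3 * (t:ℝ)^t * ((t:ℝ)+1) := by
            apply mul_le_mul_of_nonneg_right key (by positivity)
        _ ≤ 3 * (3^t * (t.factorial : ℝ)) * ((t:ℝ)+1) := by
            apply mul_le_mul_of_nonneg_right _ (by positivity)
            exact mul_le_mul_of_nonneg_left ih (by norm_num)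
        _ = 3^(t+1) * ((t.factorial : ℝ) * ((t:ℝ)+1)) := by ring
        _ = 3^(t+1) * ((t+1).factorial : ℝ) := by rw [hfac]

private lemma nat_le_geom (t : ℕ) : ((t:ℝ) + 1) ≤ 2 * (3/2) ^ t := by
  induction t with
  | zero => norm_num
  | succ u ih =>
    have h1 : (1:ℝ) ≤ (3/2)^u := one_le_pow₀ (by norm_num)
    have : ((u:ℝ) + 1 + 1) ≤ 2 * (3/2)^u + (3/2)^u := by linarith
    calc ((u+1:ℕ):ℝ) + 1 = (u:ℝ) + 1 + 1 := by push_cast; ring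
      _ ≤ 3 * (3/2)^u := by linarith
      _ = 2 * (3/2)^(u+1) := by ring

private lemma geom_sum_eq' (N : ℕ) :
    ∑ s ∈ Icc 1 N, (3/4 : ℝ)^(s-1) = 4 - 4 * (3/4)^N := by
  induction N with
  | zero => simp
  | succ M ih =>
    rw [Finset.sum_Icc_succ_top (by omega : 1 ≤ M + 1), ih]
    have : M + 1 - 1 = M := by omega
    rw [this]
    ring

private lemma geom_sum_bound (N : ℕ) : ∑ s ∈ Icc 1 N, (3/4 : ℝ)^(s-1) ≤ 4 := by
  rw [geom_sum_eq']
  have : (0:ℝ) ≤ (3/4:ℝ)^N := by positivity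
  linarith

/-- For constants η, α ∈ (0,1), k ≥ 2 with η = (1-α)/(3k), if m is sufficiently large
then ∑_{s=1}^{⌊ηn⌋} C(n,s)·(ks/((1-α)n))^{ms} → 0 as n → ∞. -/
theorem stmt0 (α η : ℝ) (k : ℕ) (hα : 0 < α ∧ α < 1) (hη : 0 < η ∧ η < 1)
    (hk : 2 ≤ k) (hηα : η = (1 - α) / (3 * k)) :
    ∃ m₀ : ℕ, ∀ m : ℕ, m₀ ≤ m →
      Filter.Tendsto
        (fun n : ℕ => ∑ s ∈ Finset.Icc 1 ⌊η * n⌋₊,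
          (n.choose s : ℝ) * ((k * s) / ((1 - α) * n)) ^ (m * s))
        Filter.atTop (nhds 0) := by
  obtain ⟨hα0, hα1⟩ := hα
  obtain ⟨hη0, hη1⟩ := hη
  have h1α : (0:ℝ) < 1 - α := by linarith
  have hkR : (2:ℝ) ≤ (k:ℝ) := by exact_mod_cast hk
  have hkpos : (0:ℝ) < k := by linarith
  -- key identity : k * η = (1-α)/3
  have hkη : (k:ℝ) * η = (1 - α) / 3 := by
    rw [hηα]; field_simp
  set K : ℝ := 54 * k^2 * η / (1 - α)^2 with hK
  have hKpos : 0 < K := by positivity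
  obtain ⟨N, hN⟩ := pow_unbounded_of_one_lt (y := (3:ℝ)) K (by norm_num)
  refine ⟨max 2 N, fun m hm => ?_⟩
  have hm2 : 2 ≤ m := le_trans (le_max_left _ _) hm
  have hmN : N ≤ m := le_trans (le_max_right _ _) hm
  set C : ℝ := 27 * k^2 / ((1 - α)^2 * 3^m) with hC
  have hCpos : 0 < C := by positivity
  have hCη : C * η ≤ 1/2 := by
    have h3 : (3:ℝ)^N ≤ 3^m := pow_le_pow_right₀ (by norm_num) hmN
    have hKm : K < 3^m := lt_of_lt_of_le hN h3
    rw [hC]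
    rw [div_mul_eq_mul_div, div_le_iff₀ (by positivity)]
    have : 27 * (k:ℝ)^2 * η = K /2 * (1-α)^2 := by
      rw [hK]; field_simp; ring
    rw [this]
    nlinarith [sq_nonneg (1-α)]
  -- upper bound function
  have key : ∀ n : ℕ, (∑ s ∈ Finset.Icc 1 ⌊η * n⌋₊,
      (n.choose s : ℝ) * ((k * s) / ((1 - α) * n)) ^ (m * s)) ≤ 8 * C / n := by
    intro n
    rcases Nat.eq_zero_or_pos n with hn | hn
    · subst hn; simp
    have hnR : (0:ℝ) < n := by exact_mod_cast hn
    have step : ∀ s ∈ Finset.Icc 1 ⌊η * n⌋₊,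
        (n.choose s : ℝ) * ((k * s) / ((1 - α) * n)) ^ (m * s)
          ≤ (2 * C / n) * (3/4)^(s-1) := by
      intro s hs
      rw [Finset.mem_Icc] at hs
      obtain ⟨hs1, hs2⟩ := hs
      have hsR : (0:ℝ) < s := by exact_mod_cast hs1
      have hsη : (s:ℝ) ≤ η * n :=
        le_trans (by exact_mod_cast hs2) (Nat.floor_le (by positivity))
      set q : ℝ := (k * s) / ((1 - α) * n) with hq
      have hq0 : 0 ≤ q := by positivity
      have hq3 : q ≤ 1/3 := by
        rw [hq, div_le_iff₀ (by positivity)]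
        have : (k:ℝ) * s ≤ k * (η * n) := by
          exact mul_le_mul_of_nonneg_left hsη (le_of_lt hkpos)
        calc (k:ℝ) * s ≤ k * η * n := by linarith [this]
          _ = (1-α)/3 * n := by rw [hkη]
          _ = 1/3 * ((1-α) * n) := by ring
      -- choose bound
      have hchoose : (n.choose s : ℝ) ≤ (3 * n / s)^s := by
        have hd : (s.factorial : ℝ) * (n.choose s : ℝ) ≤ (n:ℝ)^s := by
          have := Nat.descFactorial_le_pow n s
          have h2 := Nat.descFactorial_eq_factorial_mul_choose n s
          have : s.factorial * n.choose s ≤ n ^ s := by rw [← h2]; exact this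
          exact_mod_cast this
        have hss : (s:ℝ)^s ≤ 3^s * s.factorial := pow_self_le_three_pow_mul_factorial s
        rw [div_pow, le_div_iff₀ (by positivity), mul_pow]
        calc (n.choose s : ℝ) * (s:ℝ)^s ≤ (n.choose s : ℝ) * (3^s * s.factorial) :=
              mul_le_mul_of_nonneg_left hss (by positivity)
          _ = 3^s * ((s.factorial : ℝ) * n.choose s) := by ring
          _ ≤ 3^s * (n:ℝ)^s := mul_le_mul_of_nonneg_left hd (by positivity)
      -- q^m bound
      have hqm : q ^ m ≤ q^2 * (1/3)^(m-2) := by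
        have : q ^ m = q^2 * q^(m-2) := by
          rw [← pow_add]; congr 1; omega
        rw [this]
        apply mul_le_mul_of_nonneg_left _ (by positivity)
        exact pow_le_pow_left₀ hq0 hq3 _
      -- base identity
      have hbase : (3 * n / s) * (q^2 * (1/3)^(m-2)) = C * s / n := by
        have h3m : (3:ℝ)^m = 9 * 3^(m-2) := by
          rw [show m = 2 + (m-2) by omega, pow_add]; norm_num
        rw [hq, hC, one_div, inv_pow, h3m]
        have h32 : (0:ℝ) < (3:ℝ)^(m-2) := by positivity
        field_simp
        ring
      have hterm : (n.choose s : ℝ) * ((k * s) / ((1 - α) * n)) ^ (m * s)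
          ≤ (C * s / n)^s := by
        rw [show ((k * (s:ℕ) : ℝ)) / ((1 - α) * n) = q from rfl, pow_mul]
        calc (n.choose s : ℝ) * (q^m)^s ≤ (3*n/s)^s * (q^2 * (1/3)^(m-2))^s := by
              apply mul_le_mul hchoose (pow_le_pow_left₀ (by positivity) hqm s)
                (by positivity) (by positivity)
          _ = ((3*n/s) * (q^2 * (1/3)^(m-2)))^s := by rw [← mul_pow]
          _ = (C * s / n)^s := by rw [hbase]
      -- (C s / n)^s ≤ (C/n) * s * (1/2)^(s-1)
      have hCsn : 0 ≤ C * s / n := by positivity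
      have hCsη : C * s / n ≤ 1/2 := by
        have : C * s / n ≤ C * η := by
          rw [div_le_iff₀ hnR]
          calc C * s ≤ C * (η * n) := mul_le_mul_of_nonneg_left hsη (le_of_lt hCpos)
            _ = C * η * n := by ring
        linarith
      have hsplit : (C * s / n)^s = (C * s / n) * (C * s / n)^(s-1) := by
        have he : s = 1 + (s-1) := by omega
        have : (C * (s:ℝ) / n)^s = (C * (s:ℝ) / n)^(1 + (s-1)) := by
          congr 1
        rw [this, pow_add, pow_one]
      have hgeo : (C * s / n)^(s-1) ≤ (1/2)^(s-1) := pow_le_pow_left₀ hCsn hCsη _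
      have h2 : (C * s / n)^s ≤ (C / n) * s * (1/2)^(s-1) := by
        rw [hsplit]
        calc (C * s / n) * (C * s / n)^(s-1)
            ≤ (C * s / n) * (1/2)^(s-1) := mul_le_mul_of_nonneg_left hgeo hCsn
          _ = (C / n) * s * (1/2)^(s-1) := by ring
      have hs34 : (s:ℝ) * (1/2)^(s-1) ≤ 2 * (3/4)^(s-1) := by
        have hnle : (s:ℝ) ≤ 2 * (3/2)^(s-1) := by
          have := nat_le_geom (s-1)
          have hcast : ((s-1:ℕ):ℝ) + 1 = (s:ℝ) := by
            have : s - 1 + 1 = s := by omega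
            rw [← this]; push_cast; ring
          linarith [hcast ▸ this]
        calc (s:ℝ) * (1/2)^(s-1) ≤ 2 * (3/2)^(s-1) * (1/2)^(s-1) :=
              mul_le_mul_of_nonneg_right hnle (by positivity)
          _ = 2 * ((3/2) * (1/2))^(s-1) := by rw [mul_pow]; ring
          _ = 2 * (3/4)^(s-1) := by norm_num
      calc (n.choose s : ℝ) * ((k * s) / ((1 - α) * n)) ^ (m * s)
          ≤ (C / n) * ((s:ℝ) * (1/2)^(s-1)) := by
            have := hterm.trans h2
            calc (n.choose s : ℝ) * ((k * s) / ((1 - α) * n)) ^ (m * s)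
                ≤ (C / n) * s * (1/2)^(s-1) := this
              _ = (C / n) * ((s:ℝ) * (1/2)^(s-1)) := by ring
        _ ≤ (C / n) * (2 * (3/4)^(s-1)) :=
            mul_le_mul_of_nonneg_left hs34 (by positivity)
        _ = (2 * C / n) * (3/4)^(s-1) := by ring
    calc (∑ s ∈ Finset.Icc 1 ⌊η * n⌋₊,
        (n.choose s : ℝ) * ((k * s) / ((1 - α) * n)) ^ (m * s))
        ≤ ∑ s ∈ Finset.Icc 1 ⌊η * n⌋₊, (2 * C / n) * (3/4)^(s-1) :=
          Finset.sum_le_sum step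
      _ = (2 * C / n) * ∑ s ∈ Finset.Icc 1 ⌊η * n⌋₊, (3/4:ℝ)^(s-1) := by
          rw [Finset.mul_sum]
      _ ≤ (2 * C / n) * 4 := by
          apply mul_le_mul_of_nonneg_left (geom_sum_bound _) (by positivity)
      _ = 8 * C / n := by ring
  have hnonneg : ∀ n : ℕ, 0 ≤ (∑ s ∈ Finset.Icc 1 ⌊η * n⌋₊,
      (n.choose s : ℝ) * ((k * s) / ((1 - α) * n)) ^ (m * s)) := by
    intro n
    apply Finset.sum_nonneg
    intro s _
    positivity
  have hlim : Filter.Tendsto (fun n : ℕ => 8 * C / n) Filter.atTop (nhds 0) :=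
    tendsto_const_div_atTop_nhds_zero_nat _
  exact squeeze_zero hnonneg key hlim
end

section
/- Let D ≥ 1 be an integer. Then ∑_{s=5}^{⌊D/2⌋} C(D,s)^2 · (11s/(10D))^{10s} ≤ ∑_{s=5}^{⌊D/2⌋} ((D²e²/s²) · (11s/(10D))^{10})^s, and this quantity tends to 0 as D → ∞. -/
open Filter Finset

lemma pow_self_le_exp_mul_factorial : ∀ s : ℕ, (s : ℝ) ^ s ≤ Real.exp 1 ^ s * s.factorial := by
  intro s
  induction s with
  | zero => simp
  | succ n ih =>
    rcases Nat.eq_zero_or_pos n with h0 | hn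
    · subst h0
      simpa using Real.one_le_exp (by norm_num)
    · have hn0 : (0:ℝ) < n := by exact_mod_cast hn
      have key : ((n:ℝ) + 1) ^ n ≤ Real.exp 1 * (n:ℝ) ^ n := by
        have h1 : (n:ℝ) + 1 = (n:ℝ) * (1 + 1/n) := by field_simp
        have h2 : (1 : ℝ) + 1/n ≤ Real.exp (1/n) := by
          have := Real.add_one_le_exp (1/(n:ℝ)); linarith
        calc ((n:ℝ) + 1) ^ n = (n:ℝ) ^ n * (1 + 1/n) ^ n := by rw [h1, mul_pow]
          _ ≤ (n:ℝ) ^ n * Real.exp (1/n) ^ n := by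
              gcongr
          _ = (n:ℝ) ^ n * Real.exp 1 := by
              rw [← Real.exp_nat_mul, mul_one_div, div_self hn0.ne']
          _ = Real.exp 1 * (n:ℝ) ^ n := by ring
      have hfac : (0:ℝ) ≤ (n.factorial : ℝ) := by positivity
      have hexp : (0:ℝ) < Real.exp 1 := Real.exp_pos 1
      calc ((n+1 : ℕ) : ℝ) ^ (n+1) = ((n:ℝ)+1) ^ n * ((n:ℝ)+1) := by push_cast; ring
        _ ≤ (Real.exp 1 * (n:ℝ) ^ n) * ((n:ℝ)+1) := by
            apply mul_le_mul_of_nonneg_right key (by positivity)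
        _ ≤ (Real.exp 1 * (Real.exp 1 ^ n * n.factorial)) * ((n:ℝ)+1) := by
            apply mul_le_mul_of_nonneg_right _ (by positivity)
            exact mul_le_mul_of_nonneg_left ih (le_of_lt hexp)
        _ = Real.exp 1 ^ (n+1) * ((n+1 : ℕ).factorial : ℝ) := by
            rw [Nat.factorial_succ]; push_cast; ring

lemma choose_sq_le (D s : ℕ) :
    (D.choose s : ℝ) ^ 2 ≤ ((D : ℝ) ^ 2 * Real.exp 1 ^ 2 / s ^ 2) ^ s := by
  have hfac : (0:ℝ) < (s.factorial : ℝ) := by positivity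
  have hss : (0:ℝ) < (s:ℝ) ^ s := by
    rcases Nat.eq_zero_or_pos s with h | h
    · subst h; norm_num
    · have : (0:ℝ) < (s:ℝ) := by exact_mod_cast h
      positivity
  have h1 : (D.choose s : ℝ) ≤ (D:ℝ) ^ s / s.factorial := by
    simpa using Nat.choose_le_pow_div (α := ℝ) s D
  have h2 := pow_self_le_exp_mul_factorial s
  have h3 : (D:ℝ) ^ s / s.factorial ≤ (D:ℝ) ^ s * Real.exp 1 ^ s / (s:ℝ) ^ s := by
    rw [div_le_div_iff₀ hfac hss]
    have hD : (0:ℝ) ≤ (D:ℝ) ^ s := by positivity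
    calc (D:ℝ) ^ s * (s:ℝ) ^ s ≤ (D:ℝ) ^ s * (Real.exp 1 ^ s * s.factorial) := by
          exact mul_le_mul_of_nonneg_left h2 hD
      _ = (D:ℝ) ^ s * Real.exp 1 ^ s * s.factorial := by ring
  have h4 : (D.choose s : ℝ) ≤ ((D:ℝ) * Real.exp 1 / s) ^ s := by
    rw [div_pow, mul_pow]
    exact h1.trans h3
  have h5 : ((D:ℝ) ^ 2 * Real.exp 1 ^ 2 / s ^ 2) ^ s = (((D:ℝ) * Real.exp 1 / s) ^ s) ^ 2 := by
    have h : ((D:ℝ) * Real.exp 1 / s) ^ 2 = (D:ℝ) ^ 2 * Real.exp 1 ^ 2 / s ^ 2 := by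
      rw [div_pow, mul_pow]
    rw [← h, ← pow_mul, mul_comm 2 s, pow_mul]
  rw [h5]
  exact pow_le_pow_left₀ (by positivity) h4 2

lemma term_bound (D s : ℕ) (hs5 : 5 ≤ s) (h2s : 2 * s ≤ D) :
    ((D : ℝ) ^ 2 * Real.exp 1 ^ 2 / s ^ 2 * (11 * s / (10 * D)) ^ 10) ^ s
      ≤ 57600 / (D:ℝ) ^ 16 * ((s:ℝ) ^ 16 * (1/12 : ℝ) ^ s) := by
  have hs0 : (0:ℝ) < (s:ℝ) := by exact_mod_cast (by omega : 0 < s)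
  have hD0 : (0:ℝ) < (D:ℝ) := by exact_mod_cast (by omega : 0 < D)
  set C : ℝ := Real.exp 1 ^ 2 * (11/10 : ℝ) ^ 10 with hCdef
  set b : ℝ := (D : ℝ) ^ 2 * Real.exp 1 ^ 2 / s ^ 2 * (11 * s / (10 * D)) ^ 10 with hbdef
  have hb : b = C * ((s:ℝ)/D) ^ 8 := by
    rw [hbdef, hCdef]
    field_simp
  have hC0 : 0 ≤ C := by positivity
  have hC20 : C ≤ 20 := by
    rw [hCdef]
    nlinarith [Real.exp_one_lt_d9, Real.exp_pos 1]
  have hsd0 : (0:ℝ) ≤ (s:ℝ)/D := by positivity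
  have hsd : (s:ℝ)/D ≤ 1/2 := by
    rw [div_le_iff₀ hD0]
    have : ((2*s : ℕ) : ℝ) ≤ (D:ℝ) := by exact_mod_cast h2s
    push_cast at this
    linarith
  have hb0 : 0 ≤ b := by rw [hb]; positivity
  have hbq : b ≤ 1/12 := by
    rw [hb]
    calc C * ((s:ℝ)/D) ^ 8 ≤ 20 * (1/2 : ℝ) ^ 8 := by
          apply mul_le_mul hC20 (pow_le_pow_left₀ hsd0 hsd 8) (by positivity) (by norm_num)
      _ ≤ 1/12 := by norm_num
  have hb2 : b ^ 2 ≤ 400 * ((s:ℝ) ^ 16 / (D:ℝ) ^ 16) := by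
    have h1 : b ^ 2 = C ^ 2 * ((s:ℝ)/D) ^ 16 := by rw [hb]; ring
    have h2 : C ^ 2 ≤ 400 := by nlinarith
    rw [h1, ← div_pow]
    calc C ^ 2 * ((s:ℝ)/D) ^ 16 ≤ 400 * ((s:ℝ)/D) ^ 16 := by
          exact mul_le_mul_of_nonneg_right h2 (by positivity)
      _ = 400 * ((s:ℝ)/D) ^ 16 := rfl
  calc b ^ s = b ^ 2 * b ^ (s - 2) := by rw [← pow_add]; congr 1; omega
    _ ≤ (400 * ((s:ℝ) ^ 16 / (D:ℝ) ^ 16)) * (1/12 : ℝ) ^ (s - 2) := by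
        exact mul_le_mul hb2 (pow_le_pow_left₀ hb0 hbq _) (pow_nonneg hb0 _) (by positivity)
    _ = (400 * ((s:ℝ) ^ 16 / (D:ℝ) ^ 16)) * ((1/12 : ℝ) ^ s / (1/12 : ℝ) ^ 2) := by
        rw [pow_sub₀ _ (by norm_num) (by omega : 2 ≤ s)]
        ring
    _ = 57600 / (D:ℝ) ^ 16 * ((s:ℝ) ^ 16 * (1/12 : ℝ) ^ s) := by
        field_simp
        ring

/-- For D ≥ 1, ∑_{s=5}^{⌊D/2⌋} C(D,s)²·(11s/(10D))^{10s}
  ≤ ∑_{s=5}^{⌊D/2⌋} ((D²e²/s²)·(11s/(10D))^{10})^s, and the latter tends to 0 as D → ∞. -/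
theorem stmt2 :
    (∀ D : ℕ, 1 ≤ D →
      ∑ s ∈ Finset.Icc 5 (D / 2), (D.choose s : ℝ) ^ 2 * (11 * s / (10 * D)) ^ (10 * s)
        ≤ ∑ s ∈ Finset.Icc 5 (D / 2),
            ((D : ℝ) ^ 2 * Real.exp 1 ^ 2 / s ^ 2 * (11 * s / (10 * D)) ^ 10) ^ s) ∧
    Filter.Tendsto
      (fun D : ℕ => ∑ s ∈ Finset.Icc 5 (D / 2),
        ((D : ℝ) ^ 2 * Real.exp 1 ^ 2 / s ^ 2 * (11 * s / (10 * D)) ^ 10) ^ s)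
      Filter.atTop (nhds 0) := by
  constructor
  · intro D _
    apply Finset.sum_le_sum
    intro s _
    rw [pow_mul, mul_pow]
    exact mul_le_mul_of_nonneg_right (choose_sq_le D s) (pow_nonneg (by positivity) s)
  · have hsum : Summable (fun s : ℕ => (s:ℝ) ^ 16 * (1/12 : ℝ) ^ s) := by
      apply summable_pow_mul_geometric_of_norm_lt_one
      rw [Real.norm_eq_abs, abs_of_nonneg (by norm_num : (0:ℝ) ≤ 1/12)]
      norm_num
    set T : ℝ := ∑' s : ℕ, (s:ℝ) ^ 16 * (1/12 : ℝ) ^ s with hT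
    have hT0 : 0 ≤ T := tsum_nonneg (fun s => by positivity)
    apply squeeze_zero (g := fun D : ℕ => (57600 * T) * ((D:ℝ) ^ 16)⁻¹)
    · intro D
      apply Finset.sum_nonneg
      intro s _
      positivity
    · intro D
      calc ∑ s ∈ Finset.Icc 5 (D / 2),
            ((D : ℝ) ^ 2 * Real.exp 1 ^ 2 / s ^ 2 * (11 * s / (10 * D)) ^ 10) ^ s
          ≤ ∑ s ∈ Finset.Icc 5 (D / 2), 57600 / (D:ℝ) ^ 16 * ((s:ℝ) ^ 16 * (1/12 : ℝ) ^ s) := by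
            apply Finset.sum_le_sum
            intro s hs
            obtain ⟨hs5, hsD⟩ := Finset.mem_Icc.mp hs
            exact term_bound D s hs5 (by omega)
        _ = 57600 / (D:ℝ) ^ 16 * ∑ s ∈ Finset.Icc 5 (D / 2), (s:ℝ) ^ 16 * (1/12 : ℝ) ^ s := by
            rw [Finset.mul_sum]
        _ ≤ 57600 / (D:ℝ) ^ 16 * T := by
            apply mul_le_mul_of_nonneg_left _ (by positivity)
            exact Summable.sum_le_tsum _ (fun s _ => by positivity) hsum
        _ = (57600 * T) * ((D:ℝ) ^ 16)⁻¹ := by ring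
    · have h1 : Tendsto (fun D : ℕ => (D:ℝ) ^ 16) atTop atTop :=
        (tendsto_pow_atTop (by norm_num)).comp tendsto_natCast_atTop_atTop
      have h2 := h1.inv_tendsto_atTop
      have h3 := h2.const_mul (57600 * T)
      simpa using h3
end

section
/- For integers n, k, ℓ with 0 ≤ ℓ < k/2 and (k-ℓ) | n, set D = n/(k-ℓ). Define A_i = {(k-ℓ-1)(i-1)+1, ..., (k-ℓ-1)i + ℓ} for i = 1, ..., D with elements taken modulo n-D (representatives in {1,...,n-D}), and let B = {n-D+1, ..., n}. Then the sets A_i are (k-1)-element subsets of {1,...,n-D}, consecutive sets A_i and A_{i+1} (cyclically) intersect in exactly ℓ elements, and if φ: {1,...,D} → B is a bijection, then the edges A_i ∪ {φ(i)}, i = 1,...,D, form a Hamilton ℓ-cycle in the complete k-uniform hypergraph on [n] (a perfect matching when ℓ = 0). -/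
private lemma mod_add_inj {M a s₁ s₂ : ℕ} (h₁ : s₁ < M) (h₂ : s₂ < M)
    (h : (a + s₁) % M = (a + s₂) % M) : s₁ = s₂ := by
  have hM : 0 < M := by omega
  have key : ∀ s, s < M → (a + s) % M = if a % M + s < M then a % M + s else a % M + s - M := by
    intro s hs
    rw [Nat.add_mod, Nat.mod_eq_of_lt hs]
    split
    · exact Nat.mod_eq_of_lt ‹_›
    · rw [Nat.mod_eq_sub_mod (by omega)]
      exact Nat.mod_eq_of_lt (by have := Nat.mod_lt a hM; omega)
  have k1 := key s₁ h₁
  have k2 := key s₂ h₂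
  have hb := Nat.mod_lt a hM
  split at k1 <;> split at k2 <;> omega

private lemma mul_add_inj {m q₁ q₂ a b : ℕ} (ha : a < m) (hb : b < m)
    (h : m * q₁ + a = m * q₂ + b) : q₁ = q₂ ∧ a = b := by
  have hq : q₁ = q₂ := by
    rcases Nat.lt_trichotomy q₁ q₂ with h' | h' | h'
    · have h2 : m * (q₁ + 1) ≤ m * q₂ := Nat.mul_le_mul le_rfl (by omega)
      have h3 : m * (q₁ + 1) = m * q₁ + m := by ring
      omega
    · exact h'
    · have h2 : m * (q₂ + 1) ≤ m * q₁ := Nat.mul_le_mul le_rfl (by omega)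
      have h3 : m * (q₂ + 1) = m * q₂ + m := by ring
      omega
  subst hq
  omega

/-- `E` is a Hamilton ℓ-cycle in the complete k-uniform hypergraph on the vertex set
{1,…,n}: for some ordering v₀,…,v_{n-1} of the vertices, `E` is the set of the
n/(k-ℓ) edges {v_{(k-ℓ)i}, v_{(k-ℓ)i+1}, …, v_{(k-ℓ)i+k-1}} (indices mod n),
each consecutive pair of edges intersecting in ℓ vertices (a perfect matching
when ℓ = 0). -/
def IsHamiltonLCycle (n k ℓ : ℕ) (E : Finset (Finset ℕ)) : Prop :=
  ∃ v : ℕ → ℕ, Set.InjOn v (Set.Ico 0 n) ∧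
    Finset.image v (Finset.range n) = Finset.Icc 1 n ∧
    E = Finset.image
          (fun i => Finset.image (fun j => v (((k - ℓ) * i + j) % n)) (Finset.range k))
          (Finset.range (n / (k - ℓ))) ∧
    E.card = n / (k - ℓ)

/-- The explicit construction of the restricted board for the Hamilton ℓ-cycle game:
the sets A_i = {(k-ℓ-1)(i-1)+1, …, (k-ℓ-1)i+ℓ} (elements taken mod n-D with
representatives in {1,…,n-D}) are (k-1)-subsets of {1,…,n-D}, cyclically consecutive
ones intersect in exactly ℓ elements, and for any bijection φ : {1,…,D} → B,
where B = {n-D+1,…,n}, the edges A_i ∪ {φ(i)} form a Hamilton ℓ-cycle on [n]. -/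
theorem stmt13 (n k ℓ : ℕ) (hk2 : 2 ≤ k) (hℓ : 2 * ℓ < k) (hdvd : (k - ℓ) ∣ n)
    (D : ℕ) (hD : D = n / (k - ℓ)) (hD4 : 4 ≤ D)
    (A : ℕ → Finset ℕ)
    (hA : ∀ i, A i = Finset.image (fun j => (j - 1) % (n - D) + 1)
        (Finset.Icc ((k - ℓ - 1) * (i - 1) + 1) ((k - ℓ - 1) * i + ℓ))) :
    (∀ i ∈ Finset.Icc 1 D, (A i).card = k - 1 ∧ A i ⊆ Finset.Icc 1 (n - D)) ∧
    (∀ i ∈ Finset.Icc 1 D, (A i ∩ A (i % D + 1)).card = ℓ) ∧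
    (∀ φ : ℕ → ℕ, Set.BijOn φ (Set.Icc 1 D) (Set.Icc (n - D + 1) n) →
      IsHamiltonLCycle n k ℓ
        (Finset.image (fun i => insert (φ i) (A i)) (Finset.Icc 1 D))) := by
  obtain ⟨m, hkl⟩ : ∃ m, k = m + 1 + ℓ := ⟨k - ℓ - 1, by omega⟩
  have hℓm : ℓ ≤ m := by omega
  have hm1 : 1 ≤ m := by omega
  have hn' : n = D * (m + 1) := by
    have e1 : D * (k - ℓ) = n := hD ▸ Nat.div_mul_cancel hdvd
    have e2 : k - ℓ = m + 1 := by omega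
    rw [e2] at e1
    omega
  have hMD : n - D = D * m := by
    have h : D * (m + 1) = D * m + D := by ring
    omega
  have hMbig : 2 * m + ℓ ≤ n - D := by
    have h : 4 * m ≤ D * m := Nat.mul_le_mul hD4 le_rfl
    omega
  have hM0 : 0 < n - D := by omega
  have hn4 : 4 * (m + 1) ≤ n := by
    have h : 4 * (m + 1) ≤ D * (m + 1) := Nat.mul_le_mul hD4 le_rfl
    omega
  -- A (q+1) in a convenient form
  have hAq : ∀ q, A (q + 1)
      = (Finset.range (m + ℓ)).image (fun s => (m * q + s) % (n - D) + 1) := by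
    intro q
    rw [hA]
    have e1 : (k - ℓ - 1) * (q + 1 - 1) + 1 = m * q + 1 := by
      have h : k - ℓ - 1 = m := by omega
      rw [h]
      simp
    have e2 : (k - ℓ - 1) * (q + 1) + ℓ = m * q + (m + ℓ) := by
      have h : k - ℓ - 1 = m := by omega
      rw [h]
      ring
    rw [e1, e2]
    ext x
    simp only [Finset.mem_image, Finset.mem_Icc, Finset.mem_range]
    constructor
    · rintro ⟨j, ⟨hj1, hj2⟩, rfl⟩
      refine ⟨j - 1 - m * q, by omega, ?_⟩
      have h : m * q + (j - 1 - m * q) = j - 1 := by omega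
      rw [h]
    · rintro ⟨s, hs, rfl⟩
      refine ⟨m * q + 1 + s, ⟨by omega, by omega⟩, ?_⟩
      have h : m * q + 1 + s - 1 = m * q + s := by omega
      rw [h]
  have hcard : ∀ (a c : ℕ), c ≤ n - D →
      ((Finset.range c).image (fun s => (a + s) % (n - D) + 1)).card = c := by
    intro a c hc
    rw [Finset.card_image_of_injOn, Finset.card_range]
    intro s₁ h₁ s₂ h₂ he
    simp only [Finset.coe_range, Set.mem_Iio] at h₁ h₂
    simp only at he
    exact mod_add_inj (M := n - D) (a := a) (by omega) (by omega) (by omega)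
  have part1 : ∀ i ∈ Finset.Icc 1 D, (A i).card = k - 1 ∧ A i ⊆ Finset.Icc 1 (n - D) := by
    intro i hi
    simp only [Finset.mem_Icc] at hi
    obtain ⟨q, rfl⟩ : ∃ q, i = q + 1 := ⟨i - 1, by omega⟩
    constructor
    · rw [hAq, hcard (m * q) (m + ℓ) (by omega)]
      omega
    · rw [hAq]
      intro x hx
      simp only [Finset.mem_image, Finset.mem_range] at hx
      obtain ⟨s, _, rfl⟩ := hx
      simp only [Finset.mem_Icc]
      have := Nat.mod_lt (m * q + s) hM0
      omega
  have hAnext : ∀ i ∈ Finset.Icc 1 D, A (i % D + 1)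
      = (Finset.range (m + ℓ)).image (fun s => (m * i + s) % (n - D) + 1) := by
    intro i hi
    simp only [Finset.mem_Icc] at hi
    by_cases hiD : i < D
    · rw [Nat.mod_eq_of_lt hiD]
      obtain ⟨q, rfl⟩ : ∃ q, i = q + 1 := ⟨i - 1, by omega⟩
      exact hAq (q + 1)
    · have hieq : i = D := by omega
      rw [hieq, Nat.mod_self, hAq 0]
      refine Finset.image_congr ?_
      intro s hs
      simp only
      have h1 : m * 0 + s = s := by ring
      have h2 : m * D + s = (n - D) + s := by
        have h : m * D = n - D := by rw [hMD]; ring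
        omega
      rw [h1, h2, Nat.add_mod_left]
  have part2 : ∀ i ∈ Finset.Icc 1 D, (A i ∩ A (i % D + 1)).card = ℓ := by
    intro i hi
    have hnext := hAnext i hi
    simp only [Finset.mem_Icc] at hi
    obtain ⟨q, rfl⟩ : ∃ q, i = q + 1 := ⟨i - 1, by omega⟩
    have hint : A (q + 1) ∩ A ((q + 1) % D + 1)
        = (Finset.range ℓ).image (fun s => (m * (q + 1) + s) % (n - D) + 1) := by
      rw [hAq, hnext]
      ext x
      simp only [Finset.mem_inter, Finset.mem_image, Finset.mem_range]
      constructor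
      · rintro ⟨⟨s₁, hs₁, he₁⟩, ⟨s₂, hs₂, he₂⟩⟩
        refine ⟨s₂, ?_, he₂⟩
        have e : m * (q + 1) + s₂ = m * q + (m + s₂) := by ring
        rw [e] at he₂
        have hss := mod_add_inj (M := n - D) (a := m * q)
          (show s₁ < n - D by omega) (show m + s₂ < n - D by omega) (by omega)
        omega
      · rintro ⟨s, hs, rfl⟩
        refine ⟨⟨m + s, by omega, ?_⟩, ⟨s, by omega, rfl⟩⟩
        have e : m * q + (m + s) = m * (q + 1) + s := by ring
        rw [e]
    rw [hint]
    exact hcard (m * (q + 1)) ℓ (by omega)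
  refine ⟨part1, part2, ?_⟩
  intro φ hφ
  have hφmaps := hφ.mapsTo
  have hφinj := hφ.injOn
  have hφsurj := hφ.surjOn
  set v : ℕ → ℕ := fun t =>
    if t % (m + 1) = ℓ then φ (t / (m + 1) + 1)
    else (m * (t / (m + 1)) + (if t % (m + 1) < ℓ then t % (m + 1) else t % (m + 1) - 1))
      % (n - D) + 1 with hvdef
  have hvval : ∀ q r, r < m + 1 → v ((m + 1) * q + r)
      = if r = ℓ then φ (q + 1)
        else (m * q + (if r < ℓ then r else r - 1)) % (n - D) + 1 := by
    intro q r hr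
    have hdiv : ((m + 1) * q + r) / (m + 1) = q := by
      rw [Nat.mul_add_div (by omega)]
      simp [Nat.div_eq_of_lt hr]
    have hmod : ((m + 1) * q + r) % (m + 1) = r := by
      rw [Nat.mul_add_mod]
      exact Nat.mod_eq_of_lt hr
    simp only [hvdef]
    rw [hdiv, hmod]
  have hqbound : ∀ q, q < D → m * q + m ≤ n - D := by
    intro q hq
    have h1 : m * (q + 1) ≤ m * D := Nat.mul_le_mul le_rfl (by omega)
    have h2 : m * (q + 1) = m * q + m := by ring
    have h3 : m * D = n - D := by rw [hMD]; ring
    omega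
  have htbound : ∀ q r, q < D → r < m + 1 → (m + 1) * q + r < n := by
    intro q r hq hr
    have h1 : (m + 1) * (q + 1) ≤ (m + 1) * D := Nat.mul_le_mul le_rfl (by omega)
    have h2 : (m + 1) * (q + 1) = (m + 1) * q + (m + 1) := by ring
    have h3 : (m + 1) * D = n := by rw [hn']; ring
    omega
  have hqlt' : ∀ q r, (m + 1) * q + r < n → q < D := by
    intro q r h
    by_contra hc
    have h1 : (m + 1) * D ≤ (m + 1) * q := Nat.mul_le_mul le_rfl (by omega)
    have h3 : (m + 1) * D = n := by rw [hn']; ring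
    omega
  -- injectivity of v
  have hinj : Set.InjOn v (Set.Ico 0 n) := by
    intro t₁ ht₁ t₂ ht₂ he
    simp only [Set.mem_Ico] at ht₁ ht₂
    obtain ⟨q₁, r₁, hr₁, rfl⟩ : ∃ q r, r < m + 1 ∧ t₁ = (m + 1) * q + r :=
      ⟨_, _, Nat.mod_lt _ (by omega), (Nat.div_add_mod t₁ (m + 1)).symm⟩
    obtain ⟨q₂, r₂, hr₂, rfl⟩ : ∃ q r, r < m + 1 ∧ t₂ = (m + 1) * q + r :=
      ⟨_, _, Nat.mod_lt _ (by omega), (Nat.div_add_mod t₂ (m + 1)).symm⟩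
    have hq₁ : q₁ < D := hqlt' q₁ r₁ ht₁.2
    have hq₂ : q₂ < D := hqlt' q₂ r₂ ht₂.2
    rw [hvval q₁ r₁ hr₁, hvval q₂ r₂ hr₂] at he
    by_cases e₁ : r₁ = ℓ <;> by_cases e₂ : r₂ = ℓ
    · rw [if_pos e₁, if_pos e₂] at he
      have hqq : q₁ + 1 = q₂ + 1 :=
        hφinj (Set.mem_Icc.mpr ⟨by omega, by omega⟩) (Set.mem_Icc.mpr ⟨by omega, by omega⟩) he
      have : q₁ = q₂ := by omega
      subst this
      omega
    · rw [if_pos e₁, if_neg e₂] at he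
      have hmem := hφmaps (Set.mem_Icc.mpr (⟨by omega, by omega⟩ : 1 ≤ q₁ + 1 ∧ q₁ + 1 ≤ D))
      rw [Set.mem_Icc] at hmem
      have := Nat.mod_lt (m * q₂ + (if r₂ < ℓ then r₂ else r₂ - 1)) hM0
      omega
    · rw [if_neg e₁, if_pos e₂] at he
      have hmem := hφmaps (Set.mem_Icc.mpr (⟨by omega, by omega⟩ : 1 ≤ q₂ + 1 ∧ q₂ + 1 ≤ D))
      rw [Set.mem_Icc] at hmem
      have := Nat.mod_lt (m * q₁ + (if r₁ < ℓ then r₁ else r₁ - 1)) hM0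
      omega
    · rw [if_neg e₁, if_neg e₂] at he
      have hb₁ := hqbound q₁ hq₁
      have hb₂ := hqbound q₂ hq₂
      rw [Nat.mod_eq_of_lt (by split_ifs <;> omega), Nat.mod_eq_of_lt (by split_ifs <;> omega)]
        at he
      have h' : m * q₁ + (if r₁ < ℓ then r₁ else r₁ - 1)
          = m * q₂ + (if r₂ < ℓ then r₂ else r₂ - 1) := by omega
      obtain ⟨hq, hr⟩ := mul_add_inj (by split_ifs <;> omega) (by split_ifs <;> omega) h'
      subst hq
      split_ifs at hr <;> omega
  -- image of v
  have himg : Finset.image v (Finset.range n) = Finset.Icc 1 n := by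
    ext x
    simp only [Finset.mem_image, Finset.mem_range, Finset.mem_Icc]
    constructor
    · rintro ⟨t, ht, rfl⟩
      obtain ⟨q, r, hr, rfl⟩ : ∃ q r, r < m + 1 ∧ t = (m + 1) * q + r :=
        ⟨_, _, Nat.mod_lt _ (by omega), (Nat.div_add_mod t (m + 1)).symm⟩
      have hq : q < D := hqlt' q r ht
      rw [hvval q r hr]
      split_ifs with hrl hrlt
      · have hmem := hφmaps (Set.mem_Icc.mpr (⟨by omega, by omega⟩ : 1 ≤ q + 1 ∧ q + 1 ≤ D))
        rw [Set.mem_Icc] at hmem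
        omega
      · have := Nat.mod_lt (m * q + r) hM0
        omega
      · have := Nat.mod_lt (m * q + (r - 1)) hM0
        omega
    · rintro ⟨hx1, hx2⟩
      by_cases hxM : x ≤ n - D
      · have hm0 : 0 < m := by omega
        have hq : (x - 1) / m < D := by
          rw [Nat.div_lt_iff_lt_mul hm0]
          omega
        have hr' : (x - 1) % m < m := Nat.mod_lt _ hm0
        have hsum : m * ((x - 1) / m) + (x - 1) % m = x - 1 := Nat.div_add_mod (x - 1) m
        set r : ℕ := if (x - 1) % m < ℓ then (x - 1) % m else (x - 1) % m + 1 with hrdef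
        have hrb : r < m + 1 := by rw [hrdef]; split_ifs <;> omega
        have hrne : r ≠ ℓ := by rw [hrdef]; split_ifs <;> omega
        have hrval : (if r < ℓ then r else r - 1) = (x - 1) % m := by
          rw [hrdef]
          split_ifs <;> omega
        refine ⟨(m + 1) * ((x - 1) / m) + r, htbound _ _ hq hrb, ?_⟩
        rw [hvval _ _ hrb, if_neg hrne, hrval, hsum, Nat.mod_eq_of_lt (by omega)]
        omega
      · have hx' : x ∈ Set.Icc (n - D + 1) n := Set.mem_Icc.mpr ⟨by omega, hx2⟩
        obtain ⟨i, hi, rfl⟩ := hφsurj hx'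
        rw [Set.mem_Icc] at hi
        refine ⟨(m + 1) * (i - 1) + ℓ, htbound _ _ (by omega) (by omega), ?_⟩
        rw [hvval _ _ (by omega), if_pos rfl]
        congr 1
        omega
  -- the edge set
  have hkl2 : k - ℓ = m + 1 := by omega
  have hE : Finset.image (fun i => insert (φ i) (A i)) (Finset.Icc 1 D)
      = Finset.image
          (fun i => Finset.image (fun j => v (((k - ℓ) * i + j) % n)) (Finset.range k))
          (Finset.range (n / (k - ℓ))) := by
    rw [← hD, hkl2]
    have hIcc : Finset.Icc 1 D = Finset.image (· + 1) (Finset.range D) := by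
      ext x
      simp only [Finset.mem_Icc, Finset.mem_image, Finset.mem_range]
      constructor
      · rintro ⟨h1, h2⟩
        exact ⟨x - 1, by omega, by omega⟩
      · rintro ⟨y, hy, rfl⟩
        omega
    rw [hIcc, Finset.image_image]
    refine Finset.image_congr ?_
    intro q hq
    simp only [Finset.mem_coe, Finset.mem_range] at hq
    have hedge : ∀ j, j < k → v (((m + 1) * q + j) % n)
        = if j = ℓ then φ (q + 1)
          else (m * q + (if j < ℓ then j else j - 1)) % (n - D) + 1 := by
      intro j hj
      by_cases hjm : j < m + 1
      · rw [Nat.mod_eq_of_lt (htbound q j hq hjm)]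
        exact hvval q j hjm
      · have hs : j - (m + 1) < ℓ := by omega
        by_cases hqD : q + 1 < D
        · have e : (m + 1) * q + j = (m + 1) * (q + 1) + (j - (m + 1)) := by
            have h : (m + 1) * (q + 1) = (m + 1) * q + (m + 1) := by ring
            omega
          rw [e, Nat.mod_eq_of_lt (htbound _ _ hqD (by omega)), hvval _ _ (by omega),
            if_neg (show ¬ j - (m + 1) = ℓ by omega), if_pos hs,
            if_neg (show ¬ j = ℓ by omega), if_neg (show ¬ j < ℓ by omega)]
          have e2 : m * (q + 1) + (j - (m + 1)) = m * q + (j - 1) := by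
            have h : m * (q + 1) = m * q + m := by ring
            omega
          rw [e2]
        · have e : (m + 1) * q + j = n + (j - (m + 1)) := by
            have h1 : (m + 1) * (q + 1) = (m + 1) * q + (m + 1) := by ring
            have h2 : (m + 1) * (q + 1) = n := by
              have hq1 : q + 1 = D := by omega
              rw [hq1, hn']
              ring
            omega
          rw [e, Nat.add_mod_left, Nat.mod_eq_of_lt (by omega)]
          have hv0 := hvval 0 (j - (m + 1)) (by omega)
          have e0 : (m + 1) * 0 + (j - (m + 1)) = j - (m + 1) := by ring
          rw [e0] at hv0
          rw [hv0, if_neg (show ¬ j - (m + 1) = ℓ by omega), if_pos hs,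
            if_neg (show ¬ j = ℓ by omega), if_neg (show ¬ j < ℓ by omega)]
          have e1 : m * 0 + (j - (m + 1)) = j - (m + 1) := by ring
          have e2 : m * q + (j - 1) = (n - D) + (j - (m + 1)) := by
            have h1 : m * (q + 1) = m * q + m := by ring
            have h2 : m * (q + 1) = n - D := by
              have hq1 : q + 1 = D := by omega
              rw [hq1, hMD]
              ring
            omega
          rw [e1, e2, Nat.add_mod_left]
    have hedgeset : Finset.image (fun j => v (((m + 1) * q + j) % n)) (Finset.range k)
        = insert (φ (q + 1)) (A (q + 1)) := by
      rw [hAq q]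
      ext x
      simp only [Finset.mem_image, Finset.mem_range, Finset.mem_insert]
      constructor
      · rintro ⟨j, hj, rfl⟩
        rw [hedge j hj]
        by_cases hjl : j = ℓ
        · rw [if_pos hjl]
          exact Or.inl rfl
        · rw [if_neg hjl]
          exact Or.inr ⟨if j < ℓ then j else j - 1, by split_ifs <;> omega, rfl⟩
      · rintro (rfl | ⟨s, hs, rfl⟩)
        · exact ⟨ℓ, by omega, by rw [hedge ℓ (by omega), if_pos rfl]⟩
        · refine ⟨if s < ℓ then s else s + 1, by split_ifs <;> omega, ?_⟩
          rw [hedge _ (by split_ifs <;> omega), if_neg (by split_ifs <;> omega)]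
          have h : (if (if s < ℓ then s else s + 1) < ℓ then (if s < ℓ then s else s + 1)
              else (if s < ℓ then s else s + 1) - 1) = s := by
            split_ifs <;> omega
          rw [h]
    exact hedgeset.symm
  -- cardinality of the edge set
  have hcardE : (Finset.image (fun i => insert (φ i) (A i)) (Finset.Icc 1 D)).card
      = n / (k - ℓ) := by
    rw [← hD]
    have hinjF : Set.InjOn (fun i => insert (φ i) (A i)) ↑(Finset.Icc 1 D) := by
      intro i₁ h₁ i₂ h₂ he
      simp only [Finset.coe_Icc, Set.mem_Icc] at h₁ h₂
      have hm₁ : φ i₁ ∈ insert (φ i₁) (A i₁) := Finset.mem_insert_self _ _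
      simp only at he
      rw [he] at hm₁
      rcases Finset.mem_insert.mp hm₁ with h | h
      · exact hφinj (Set.mem_Icc.mpr h₁) (Set.mem_Icc.mpr h₂) h
      · exfalso
        have hsub := (part1 i₂ (Finset.mem_Icc.mpr h₂)).2
        have hmem := hsub h
        simp only [Finset.mem_Icc] at hmem
        have hb := hφmaps (Set.mem_Icc.mpr h₁)
        rw [Set.mem_Icc] at hb
        omega
    rw [Finset.card_image_of_injOn hinjF, Nat.card_Icc]
    omega
  exact ⟨v, hinj, himg, hE, hcardE⟩
end

section
/- Let k ≥ 3 and let ℓ = ⌈n/log n⌉. For 3 ≤ s ≤ k and 1 ≤ t ≤ ℓ, one has C(t, s-1)·C(n, k-s)/t = O(1/log n) · C(t, s-2)·C(n, k-s+1)/t, uniformly. Consequently ∑_{t=1}^{ℓ} ∑_{s=2}^{k} C(t,s-1)·C(n,k-s)/t ≤ (1 + O(1/log n)) · ℓ · C(n, k-2). -/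
private lemma stmt16_log_ge_one {n : ℕ} (hn : 3 ≤ n) : 1 ≤ Real.log n := by
  rw [Real.le_log_iff_exp_le (by exact_mod_cast Nat.lt_of_lt_of_le (by norm_num) hn : (0:ℝ) < n)]
  calc Real.exp 1 ≤ 2.7182818286 := le_of_lt Real.exp_one_lt_d9
    _ ≤ 3 := by norm_num
    _ ≤ n := by exact_mod_cast hn

private lemma stmt16_ceil_le_two {n : ℕ} (hn : 3 ≤ n) :
    (⌈(n:ℝ)/Real.log n⌉₊ : ℝ) ≤ 2 * ((n:ℝ)/Real.log n) := by
  have h1 := stmt16_log_ge_one hn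
  have hL : (0:ℝ) < Real.log n := lt_of_lt_of_le one_pos h1
  have hx : (1:ℝ) ≤ (n:ℝ)/Real.log n := by
    rw [le_div_iff₀ hL]
    have : Real.log n ≤ (n:ℝ) :=
      (Real.log_le_sub_one_of_pos (by positivity)).trans (by linarith [show (0:ℝ) ≤ n by positivity])
    linarith
  have := Nat.ceil_lt_add_one (show (0:ℝ) ≤ (n:ℝ)/Real.log n by positivity)
  linarith

private lemma stmt16_key (k n s t : ℕ) (hs3 : 3 ≤ s) (hsk : s ≤ k) (hn2k : 2*k ≤ n)
    (h1 : 1 ≤ Real.log n)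
    (htl : (t:ℝ) ≤ 2 * ((n:ℝ)/Real.log n)) :
    (t.choose (s-1) * n.choose (k-s) : ℝ) ≤
      (4*k)/Real.log n * (t.choose (s-2) * n.choose (k-s+1)) := by
  have hL : (0:ℝ) < Real.log n := lt_of_lt_of_le one_pos h1
  have e1 : t.choose (s-2+1) * (s-2+1) = t.choose (s-2) * (t - (s-2)) :=
    Nat.choose_succ_right_eq t (s-2)
  have hs1 : s - 2 + 1 = s - 1 := by omega
  rw [hs1] at e1
  have h1' : t.choose (s-1) ≤ t.choose (s-2) * t := by
    calc t.choose (s-1) ≤ t.choose (s-1) * (s-1) :=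
          Nat.le_mul_of_pos_right _ (by omega)
      _ = t.choose (s-2) * (t - (s-2)) := e1
      _ ≤ t.choose (s-2) * t := Nat.mul_le_mul_left _ (Nat.sub_le _ _)
  have e2 : n.choose (k-s+1) * (k-s+1) = n.choose (k-s) * (n - (k-s)) :=
    Nat.choose_succ_right_eq n (k-s)
  have h2' : n.choose (k-s) * (n-k) ≤ n.choose (k-s+1) * (k-2) := by
    calc n.choose (k-s) * (n-k) ≤ n.choose (k-s) * (n-(k-s)) :=
          Nat.mul_le_mul_left _ (by omega)
      _ = n.choose (k-s+1) * (k-s+1) := e2.symm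
      _ ≤ n.choose (k-s+1) * (k-2) := Nat.mul_le_mul_left _ (by omega)
  have hNat : t.choose (s-1) * n.choose (k-s) * (n-k) ≤
      (t * (k-2)) * (t.choose (s-2) * n.choose (k-s+1)) := by
    calc t.choose (s-1) * n.choose (k-s) * (n-k)
        = t.choose (s-1) * (n.choose (k-s) * (n-k)) := by ring
      _ ≤ (t.choose (s-2) * t) * (n.choose (k-s+1) * (k-2)) := Nat.mul_le_mul h1' h2'
      _ = (t * (k-2)) * (t.choose (s-2) * n.choose (k-s+1)) := by ring
  have hkn : k ≤ n := by omega
  have hR : (t.choose (s-1) : ℝ) * n.choose (k-s) * ((n:ℝ) - k) ≤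
      ((t:ℝ) * ((k:ℝ)-2)) * (t.choose (s-2) * n.choose (k-s+1)) := by
    have := (Nat.cast_le (α := ℝ)).mpr hNat
    push_cast [Nat.cast_sub hkn, Nat.cast_sub (show 2 ≤ k by omega)] at this
    convert this using 2
  have hnk : (0:ℝ) < (n:ℝ) - k := by
    have : (k:ℝ) + k ≤ n := by exact_mod_cast (by omega : k + k ≤ n)
    have hk0 : (0:ℝ) < k := by exact_mod_cast (by omega : 0 < k)
    linarith
  have hcoef : (t:ℝ) * ((k:ℝ)-2) ≤ (4*k)/Real.log n * ((n:ℝ)-k) := by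
    have hk0 : (0:ℝ) < k := by exact_mod_cast (by omega : 0 < k)
    have hkn' : 2*(k:ℝ) ≤ n := by exact_mod_cast hn2k
    have hkR : (3:ℝ) ≤ k := by exact_mod_cast (by omega : 3 ≤ k)
    have htL : (t:ℝ) * Real.log n ≤ 2*(n:ℝ) := by
      calc (t:ℝ) * Real.log n ≤ 2*((n:ℝ)/Real.log n) * Real.log n :=
            mul_le_mul_of_nonneg_right htl hL.le
        _ = 2*(n:ℝ) := by field_simp
    rw [div_mul_eq_mul_div, le_div_iff₀ hL]
    nlinarith [mul_le_mul_of_nonneg_right htL (show (0:ℝ) ≤ (k:ℝ)-2 by linarith),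
      mul_le_mul_of_nonneg_left hkn' hk0.le]
  have hB : (0:ℝ) ≤ (t.choose (s-2) : ℝ) * n.choose (k-s+1) := by positivity
  have hmul := mul_le_mul_of_nonneg_right hcoef hB
  have hfin := hR.trans hmul
  have e2' : 4*(k:ℝ)/Real.log n * ((n:ℝ)-k) * ((t.choose (s-2):ℝ) * n.choose (k-s+1))
      = (4*(k:ℝ)/Real.log n * ((t.choose (s-2):ℝ) * n.choose (k-s+1))) * ((n:ℝ)-k) := by
    ring
  rw [e2'] at hfin
  exact le_of_mul_le_mul_right hfin hnk

private lemma stmt16_chain (k n t : ℕ) (hk : 3 ≤ k) (hn2k : 2*k ≤ n) (hn3 : 3 ≤ n)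
    (htl : (t:ℝ) ≤ 2 * ((n:ℝ)/Real.log n)) :
    ∀ s : ℕ, 2 ≤ s → s ≤ k →
      (t.choose (s-1) * n.choose (k-s) : ℝ) ≤
        ((4*k)/Real.log n)^(s-2) * ((t:ℝ) * n.choose (k-2)) := by
  have h1 := stmt16_log_ge_one hn3
  intro s hs2
  induction s, hs2 using Nat.le_induction with
  | base =>
    intro _
    simp [Nat.choose_one_right]
  | succ s hs ih =>
    intro hsk
    have hq0 : (0:ℝ) ≤ (4*k)/Real.log n := by positivity
    have hkey := stmt16_key k n (s+1) t (by omega) hsk hn2k h1 htl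
    have e1 : s + 1 - 1 = s := by omega
    have e2 : s + 1 - 2 = s - 1 := by omega
    have e3 : k - (s+1) + 1 = k - s := by omega
    rw [e1, e2, e3] at hkey
    refine hkey.trans ?_
    have := mul_le_mul_of_nonneg_left (ih (by omega)) hq0
    refine this.trans_eq ?_
    rw [← mul_assoc, ← pow_succ']
    congr 2
    omega

/-- For fixed k ≥ 3 and ℓ(n) = ⌈n/log n⌉: uniformly for 3 ≤ s ≤ k and 1 ≤ t ≤ ℓ(n),
C(t,s-1)C(n,k-s)/t = O(1/log n)·C(t,s-2)C(n,k-s+1)/t, and consequently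
∑_{t=1}^{ℓ(n)} ∑_{s=2}^{k} C(t,s-1)C(n,k-s)/t ≤ (1 + O(1/log n))·ℓ(n)·C(n,k-2). -/
theorem stmt16 (k : ℕ) (hk : 3 ≤ k) :
    (∃ C : ℝ, 0 < C ∧ ∃ n₀ : ℕ, ∀ n : ℕ, n₀ ≤ n → ∀ s : ℕ, 3 ≤ s → s ≤ k →
      ∀ t : ℕ, 1 ≤ t → t ≤ ⌈(n : ℝ) / Real.log n⌉₊ →
        (t.choose (s - 1) * n.choose (k - s) : ℝ) / t
          ≤ C / Real.log n * ((t.choose (s - 2) * n.choose (k - s + 1) : ℝ) / t)) ∧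
    (∃ C : ℝ, 0 < C ∧ ∃ n₀ : ℕ, ∀ n : ℕ, n₀ ≤ n →
      ∑ t ∈ Finset.Icc 1 ⌈(n : ℝ) / Real.log n⌉₊, ∑ s ∈ Finset.Icc 2 k,
          (t.choose (s - 1) * n.choose (k - s) : ℝ) / t
        ≤ (1 + C / Real.log n) * (⌈(n : ℝ) / Real.log n⌉₊ : ℝ) * n.choose (k - 2)) := by
  constructor
  · refine ⟨4*k, by positivity, 2*k + 3, fun n hn s hs3 hsk t ht1 htl => ?_⟩
    have hn3 : 3 ≤ n := by omega
    have h1 := stmt16_log_ge_one hn3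
    have htl' : (t:ℝ) ≤ 2 * ((n:ℝ)/Real.log n) :=
      le_trans (by exact_mod_cast htl) (stmt16_ceil_le_two hn3)
    have hkey := stmt16_key k n s t hs3 hsk (by omega) h1 htl'
    have ht0 : (0:ℝ) < t := by exact_mod_cast ht1
    rw [← mul_div_assoc, div_le_div_iff₀ ht0 ht0]
    exact mul_le_mul_of_nonneg_right hkey ht0.le
  · refine ⟨4*k*(k-2), ?_, ⌈Real.exp (4*k)⌉₊ + 2*k + 3, fun n hn => ?_⟩
    · have : (3:ℝ) ≤ k := by exact_mod_cast hk
      nlinarith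
    have hn3 : 3 ≤ n := by omega
    have hn2k : 2*k ≤ n := by omega
    have h1 := stmt16_log_ge_one hn3
    have hL : (0:ℝ) < Real.log n := lt_of_lt_of_le one_pos h1
    set q : ℝ := (4*k)/Real.log n with hq
    have hq0 : (0:ℝ) ≤ q := by positivity
    have hq1 : q ≤ 1 := by
      rw [hq, div_le_one hL]
      rw [Real.le_log_iff_exp_le (by positivity : (0:ℝ) < (n:ℝ))]
      calc Real.exp (4*(k:ℝ)) ≤ (⌈Real.exp (4*(k:ℝ))⌉₊ : ℝ) := Nat.le_ceil _
        _ ≤ n := by exact_mod_cast (by omega : ⌈Real.exp (4*(k:ℝ))⌉₊ ≤ n)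
    -- pointwise bound on each inner sum
    have inner : ∀ t ∈ Finset.Icc 1 ⌈(n : ℝ) / Real.log n⌉₊,
        ∑ s ∈ Finset.Icc 2 k, (t.choose (s - 1) * n.choose (k - s) : ℝ) / t
          ≤ (1 + (k-2:ℕ) * q) * n.choose (k - 2) := by
      intro t htmem
      rw [Finset.mem_Icc] at htmem
      obtain ⟨ht1, htl⟩ := htmem
      have ht0 : (0:ℝ) < t := by exact_mod_cast ht1
      have htl' : (t:ℝ) ≤ 2 * ((n:ℝ)/Real.log n) :=
        le_trans (by exact_mod_cast htl) (stmt16_ceil_le_two hn3)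
      have hterm : ∀ s ∈ Finset.Icc 2 k,
          (t.choose (s - 1) * n.choose (k - s) : ℝ) / t ≤ q^(s-2) * n.choose (k-2) := by
        intro s hsmem
        rw [Finset.mem_Icc] at hsmem
        have := stmt16_chain k n t hk hn2k hn3 htl' s hsmem.1 hsmem.2
        rw [div_le_iff₀ ht0]
        calc (t.choose (s - 1) * n.choose (k - s) : ℝ)
            ≤ q^(s-2) * ((t:ℝ) * n.choose (k-2)) := this
          _ = q^(s-2) * (n.choose (k-2):ℝ) * t := by ring
      -- split off s = 2
      have hsplit : Finset.Icc 2 k = insert 2 (Finset.Icc 3 k) := by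
        ext x; simp [Finset.mem_Icc, Finset.mem_insert]; omega
      calc ∑ s ∈ Finset.Icc 2 k, (t.choose (s - 1) * n.choose (k - s) : ℝ) / t
          ≤ ∑ s ∈ Finset.Icc 2 k, q^(s-2) * n.choose (k-2) := Finset.sum_le_sum hterm
        _ = q^0 * (n.choose (k-2):ℝ) + ∑ s ∈ Finset.Icc 3 k, q^(s-2) * n.choose (k-2) := by
            rw [hsplit, Finset.sum_insert (by simp)]
        _ ≤ (n.choose (k-2):ℝ) + ∑ s ∈ Finset.Icc 3 k, q * n.choose (k-2) := by
            rw [pow_zero, one_mul]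
            refine add_le_add le_rfl (Finset.sum_le_sum ?_)
            intro s hsmem
            rw [Finset.mem_Icc] at hsmem
            apply mul_le_mul_of_nonneg_right _ (Nat.cast_nonneg _)
            calc q^(s-2) ≤ q^1 := pow_le_pow_of_le_one hq0 hq1 (by omega)
              _ = q := pow_one q
        _ = (1 + (k-2:ℕ) * q) * n.choose (k-2) := by
            rw [Finset.sum_const, Nat.card_Icc]
            have : k + 1 - 3 = k - 2 := by omega
            rw [this]
            push_cast
            ring
    calc ∑ t ∈ Finset.Icc 1 ⌈(n : ℝ) / Real.log n⌉₊, ∑ s ∈ Finset.Icc 2 k,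
            (t.choose (s - 1) * n.choose (k - s) : ℝ) / t
        ≤ ∑ t ∈ Finset.Icc 1 ⌈(n : ℝ) / Real.log n⌉₊, (1 + (k-2:ℕ) * q) * (n.choose (k - 2):ℝ) :=
          Finset.sum_le_sum inner
      _ = (⌈(n : ℝ) / Real.log n⌉₊ : ℝ) * ((1 + (k-2:ℕ) * q) * n.choose (k - 2)) := by
          rw [Finset.sum_const, Nat.card_Icc]
          simp
      _ = (1 + (4*k*((k:ℝ)-2)) / Real.log n) * (⌈(n : ℝ) / Real.log n⌉₊ : ℝ) * n.choose (k - 2) := by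
          have hc : ((k-2:ℕ):ℝ) = (k:ℝ) - 2 := by
            push_cast [Nat.cast_sub (show 2 ≤ k by omega)]; ring
          rw [hc, hq]
          field_simp
      _ = (1 + 4*(k:ℝ)*((k:ℝ)-2) / Real.log n) * (⌈(n : ℝ) / Real.log n⌉₊ : ℝ) * n.choose (k - 2) := by
          norm_num
end
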